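/- arXiv:1104.3954 — 13 statements merged into one kernel-verified Lean document; each statement's English description precedes it below -/
import Mathlib

section
/- Let A be an associative algebra with idempotent q and let x, y, z ∈ A satisfy qxq = qx, qyq = qy, qzq = qz. Fix k, h ∈ k. Then the product x ∘₁ y := k·yx + h·y(qx) is associative: (x∘₁y)∘₁z = x∘₁(y∘₁z). -/
theorem hu_liu_product_1_assoc
    {k A : Type*} [Field k] [Ring A] [Algebra k A]
    (q : A) (hq : q * q = q) (c h : k) (x y z : A)
    (hx : q * x * q = q * x) (hy : q * y * q = q * y) (hz : q * z * q = q * z)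
    (mul1 : A → A → A)
    (hmul : ∀ a b : A, mul1 a b = c • (b * a) + h • (b * (q * a))) :
    mul1 (mul1 x y) z = mul1 x (mul1 y z) := by
  have hy' : q * (y * (q * x)) = q * (y * x) := by
    rw [← mul_assoc, ← mul_assoc, hy, mul_assoc]
  simp only [hmul, mul_add, add_mul, smul_add, mul_smul_comm, smul_mul_assoc, smul_smul,
    mul_assoc, hy']
  ring_nf
  abel
end

section
/- Let A be an associative algebra with idempotent q and x, y, z elements with qxq = qx, qyq = qy, qzq = qz, and k a fixed scalar. Then the product x ∘₂ y := k·yx − k·y(qx) + (qx)y is associative: (x∘₂y)∘₂z = x∘₂(y∘₂z). -/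
theorem hu_liu_product_2_assoc
    {k A : Type*} [Field k] [Ring A] [Algebra k A]
    (q : A) (hq : q * q = q) (c : k) (x y z : A)
    (hx : q * x * q = q * x) (hy : q * y * q = q * y) (hz : q * z * q = q * z)
    (mul2 : A → A → A)
    (hmul : ∀ a b : A, mul2 a b = c • (b * a) - c • (b * (q * a)) + (q * a) * b) :
    mul2 (mul2 x y) z = mul2 x (mul2 y z) := by
  have fx : ∀ t : A, q * (x * (q * t)) = q * (x * t) := by
    intro t; rw [← mul_assoc, ← mul_assoc, hx, mul_assoc]
  have fy : ∀ t : A, q * (y * (q * t)) = q * (y * t) := by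
    intro t; rw [← mul_assoc, ← mul_assoc, hy, mul_assoc]
  have fz : ∀ t : A, q * (z * (q * t)) = q * (z * t) := by
    intro t; rw [← mul_assoc, ← mul_assoc, hz, mul_assoc]
  have hq' : ∀ t : A, q * (q * t) = q * t := by
    intro t; rw [← mul_assoc, hq]
  have g_yzx : q * (y * (z * (q * x))) = q * (y * (z * x)) := by
    rw [← fy (z * (q * x)), fz, fy]
  have g_xzy : q * (x * (z * (q * y))) = q * (x * (z * y)) := by
    rw [← fx (z * (q * y)), fz, fx]
  simp only [hmul, mul_add, mul_sub, add_mul, sub_mul, smul_add, smul_sub,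
    mul_smul_comm, smul_mul_assoc, mul_assoc, fx, fy, fz, hq', g_yzx, g_xzy]
  module
end

section
/- Let A be an associative algebra with idempotent q and x, y, z elements with qxq = qx, qyq = qy, qzq = qz, and k a fixed scalar. Then the product x ∘₉ y := xy − x(qy) + k·(qx)y is associative: (x∘₉y)∘₉z = x∘₉(y∘₉z). -/
theorem hu_liu_product_9_assoc
    {k A : Type*} [Field k] [Ring A] [Algebra k A]
    (q : A) (hq : q * q = q) (c : k) (x y z : A)
    (hx : q * x * q = q * x) (hy : q * y * q = q * y) (hz : q * z * q = q * z)
    (mul9 : A → A → A)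
    (hmul : ∀ a b : A, mul9 a b = a * b - a * (q * b) + c • ((q * a) * b)) :
    mul9 (mul9 x y) z = mul9 x (mul9 y z) := by
  have hq' : ∀ t : A, q * (q * t) = q * t := fun t => by rw [← mul_assoc, hq]
  have hx' : ∀ t : A, q * (x * (q * t)) = q * (x * t) := fun t => by
    rw [← mul_assoc, ← mul_assoc, hx, mul_assoc]
  have hy' : ∀ t : A, q * (y * (q * t)) = q * (y * t) := fun t => by
    rw [← mul_assoc, ← mul_assoc, hy, mul_assoc]
  have hz' : q * (z * q) = q * z := by rw [← mul_assoc, hz]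
  simp only [hmul, mul_sub, sub_mul, smul_mul_assoc, mul_smul_comm, mul_add,
    add_mul, smul_sub, smul_add, smul_smul, mul_assoc, hq', hx', hy']
  abel
end

section
/- Let A be an associative algebra with idempotent q and x, y, z elements with qxq = qx, qyq = qy, qzq = qz, and k a fixed scalar. Then the product x ∘₁₄ y := xy + k·x(qy) − (xy)q is associative: (x∘₁₄y)∘₁₄z = x∘₁₄(y∘₁₄z). -/
theorem hu_liu_product_14_assoc
    {k A : Type*} [Field k] [Ring A] [Algebra k A]
    (q : A) (hq : q * q = q) (c : k) (x y z : A)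
    (hx : q * x * q = q * x) (hy : q * y * q = q * y) (hz : q * z * q = q * z)
    (mul14 : A → A → A)
    (hmul : ∀ a b : A, mul14 a b = a * b + c • (a * (q * b)) - (a * b) * q) :
    mul14 (mul14 x y) z = mul14 x (mul14 y z) := by
  have hy0 : q * (y * q) = q * y := by rw [← mul_assoc, hy]
  have hz0 : q * (z * q) = q * z := by rw [← mul_assoc, hz]
  have hy1 : ∀ t : A, q * (y * (q * t)) = q * (y * t) := fun t => by
    rw [← mul_assoc, ← mul_assoc, hy, mul_assoc]
  have hz1 : ∀ t : A, q * (z * (q * t)) = q * (z * t) := fun t => by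
    rw [← mul_assoc, ← mul_assoc, hz, mul_assoc]
  have hq1 : ∀ t : A, q * (q * t) = q * t := fun t => by rw [← mul_assoc, hq]
  simp only [hmul, mul_add, add_mul, mul_sub, sub_mul, smul_mul_assoc,
    mul_smul_comm, mul_assoc, hy0, hz0, hy1, hz1, hq1, hq]
  module
end

section
/- Let A be an associative algebra with idempotent q and x, y, z elements with qxq = qx, qyq = qy, qzq = qz. Define [x,y]₁ := (qx)y − (qy)x. Then the Jacobi identity holds: [[x,y]₁,z]₁ + [[y,z]₁,x]₁ + [[z,x]₁,y]₁ = 0. -/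
theorem square_bracket_1_jacobi
    {k A : Type*} [Field k] [Ring A] [Algebra k A]
    (q : A) (hq : q * q = q) (x y z : A)
    (hx : q * x * q = q * x) (hy : q * y * q = q * y) (hz : q * z * q = q * z)
    (br : A → A → A)
    (hbr : ∀ a b : A, br a b = (q * a) * b - (q * b) * a) :
    br (br x y) z + br (br y z) x + br (br z x) y = 0 := by
  have key : ∀ a b c : A, q * a * q = q * a → q * c * q = q * c →
      br (br a b) c = q*a*b*c - q*b*a*c - q*c*a*b + q*c*b*a := by
    intro a b c _ hc
    rw [hbr, hbr]
    simp only [mul_sub, sub_mul, ← mul_assoc, hq, hc]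
    abel
  rw [key x y z hx hz, key y z x hy hx, key z x y hz hy]
  abel
end

section
/- Let A be an associative algebra with idempotent q and x, y, z elements of the invariant algebra (A,q), and h, k scalars. Define [x,y]_{3,k} := xy − yx + k·x(qy) − k·y(qx). Then the long Jacobi-like identity holds: [[x,y]_{3,h},z]_{3,k} + [[y,z]_{3,h},x]_{3,k} + [[z,x]_{3,h},y]_{3,k} + [[x,y]_{3,k},z]_{3,h} + [[y,z]_{3,k},x]_{3,h} + [[z,x]_{3,k},y]_{3,h} = 0. -/
def jacC {A : Type*} [Ring A] (a b d : A) : A :=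
  (a * b - b * a) * d - d * (a * b - b * a)

def jacS {A : Type*} [Ring A] (q a b d : A) : A :=
  (a * (q * b) - b * (q * a)) * d - d * (a * (q * b) - b * (q * a))

def jacT {A : Type*} [Ring A] (q a b d : A) : A :=
  (a * b - b * a) * (q * d) - d * (q * (a * b - b * a))

def jacR {A : Type*} [Ring A] (q a b d : A) : A :=
  (a * (q * b) - b * (q * a)) * (q * d) - d * (q * (a * (q * b) - b * (q * a)))

theorem square_bracket_3_long_jacobi
    {k A : Type*} [Field k] [Ring A] [Algebra k A]
    (q : A) (hq : q * q = q) (h c : k) (x y z : A)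
    (hx : q * x * q = q * x) (hy : q * y * q = q * y) (hz : q * z * q = q * z)
    (br : k → A → A → A)
    (hbr : ∀ (t : k) (a b : A),
      br t a b = a * b - b * a + t • (a * (q * b)) - t • (b * (q * a))) :
    br c (br h x y) z + br c (br h y z) x + br c (br h z x) y +
    br h (br c x y) z + br h (br c y z) x + br h (br c z x) y = 0 := by
  have hx' : ∀ b : A, q * (x * (q * b)) = q * (x * b) := fun b => by
    calc q * (x * (q * b)) = (q * x * q) * b := by noncomm_ring
    _ = q * (x * b) := by rw [hx]; noncomm_ring
  have hy' : ∀ b : A, q * (y * (q * b)) = q * (y * b) := fun b => by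
    calc q * (y * (q * b)) = (q * y * q) * b := by noncomm_ring
    _ = q * (y * b) := by rw [hy]; noncomm_ring
  have hz' : ∀ b : A, q * (z * (q * b)) = q * (z * b) := fun b => by
    calc q * (z * (q * b)) = (q * z * q) * b := by noncomm_ring
    _ = q * (z * b) := by rw [hz]; noncomm_ring
  have key : ∀ (s t : k) (a b d : A), br t (br s a b) d =
      jacC a b d + s • jacS q a b d + t • jacT q a b d + (s * t) • jacR q a b d := by
    intro s t a b d
    rw [hbr, hbr]
    simp only [jacC, jacS, jacT, jacR, add_mul, sub_mul, mul_add, mul_sub,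
      smul_mul_assoc, mul_smul_comm, smul_sub, smul_add, smul_smul]
    module
  have hJ : jacC x y z + jacC y z x + jacC z x y = 0 := by
    simp only [jacC]; noncomm_ring
  have hH : jacS q x y z + jacS q y z x + jacS q z x y +
      (jacT q x y z + jacT q y z x + jacT q z x y) = 0 := by
    simp only [jacS, jacT]; noncomm_ring
  have hR : jacR q x y z + jacR q y z x + jacR q z x y = 0 := by
    simp only [jacR, mul_sub, sub_mul, mul_assoc, hx', hy', hz']
    noncomm_ring
  rw [key h c x y z, key h c y z x, key h c z x y,
      key c h x y z, key c h y z x, key c h z x y, mul_comm c h]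
  have hfin : (jacC x y z + jacC y z x + jacC z x y) +
      (jacC x y z + jacC y z x + jacC z x y) +
      h • (jacS q x y z + jacS q y z x + jacS q z x y +
        (jacT q x y z + jacT q y z x + jacT q z x y)) +
      c • (jacS q x y z + jacS q y z x + jacS q z x y +
        (jacT q x y z + jacT q y z x + jacT q z x y)) +
      (h * c) • (jacR q x y z + jacR q y z x + jacR q z x y) +
      (h * c) • (jacR q x y z + jacR q y z x + jacR q z x y) = 0 := by
    rw [hJ, hH, hR]; simp
  rw [← hfin]
  module
end

section
/- Let A be an associative algebra with idempotent q over a field of characteristic ≠ 2, and x, y elements of (A,q). Then the product x ⊙₁ y := (1/2)((qx)y + (qy)x) is commutative and satisfies the Jordan identity: ((x⊙₁x)⊙₁y)⊙₁x = (x⊙₁x)⊙₁(y⊙₁x). -/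
theorem jordan_product_1
    {k A : Type*} [Field k] [Ring A] [Algebra k A]
    (hchar : (2 : k) ≠ 0)
    (q : A) (hq : q * q = q) (x y : A)
    (hx : q * x * q = q * x) (hy : q * y * q = q * y)
    (jmul : A → A → A)
    (hjmul : ∀ a b : A, jmul a b = (2 : k)⁻¹ • ((q * a) * b + (q * b) * a)) :
    (∀ a b : A, jmul a b = jmul b a) ∧
    jmul (jmul (jmul x x) y) x = jmul (jmul x x) (jmul y x) := by
  have d1 : q * x * x * q = q * x * x := by
    have : q * x * x = q * x * (q * x) := by
      rw [← mul_assoc, hx]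
    rw [this, mul_assoc, hx, ← mul_assoc]
  have d2 : q * y * x * q = q * y * x := by
    have : q * y * x = q * y * (q * x) := by
      rw [← mul_assoc, hy]
    rw [this, mul_assoc, hx, ← mul_assoc]
  have d3 : q * x * y * q = q * x * y := by
    have : q * x * y = q * x * (q * y) := by
      rw [← mul_assoc, hx]
    rw [this, mul_assoc, hy, ← mul_assoc]
  constructor
  · intro a b
    rw [hjmul, hjmul, add_comm]
  · simp only [hjmul, smul_add, mul_smul_comm, smul_mul_assoc, smul_smul,
      mul_add, add_mul, ← mul_assoc, hq, hx, hy, d1, d2, d3]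
    module
end

section
/- Let A be an associative algebra with idempotent q over a field of characteristic ≠ 2, k a fixed scalar, and x, y ∈ (A,q). Then x ⊙₃ y := (1/2)(xy + k·x(qy) + yx + k·y(qx)) satisfies the Jordan identity: ((x⊙₃x)⊙₃y)⊙₃x = (x⊙₃x)⊙₃(y⊙₃x). -/
theorem jordan_product_3
    {k A : Type*} [Field k] [Ring A] [Algebra k A]
    (hchar : (2 : k) ≠ 0)
    (q : A) (hq : q * q = q) (c : k) (x y : A)
    (hx : q * x * q = q * x) (hy : q * y * q = q * y)
    (jmul : A → A → A)
    (hjmul : ∀ a b : A,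
      jmul a b = (2 : k)⁻¹ • (a * b + c • (a * (q * b)) + b * a + c • (b * (q * a)))) :
    jmul (jmul (jmul x x) y) x = jmul (jmul x x) (jmul y x) := by
  obtain ⟨m, hm⟩ : ∃ m : A → A → A, ∀ a b, m a b = a * b + c • (a * (q * b)) :=
    ⟨fun a b => a * b + c • (a * (q * b)), fun _ _ => rfl⟩
  have hj : ∀ a b, jmul a b = (2 : k)⁻¹ • (m a b + m b a) := by
    intro a b
    rw [hjmul]
    rw [hm a b, hm b a]
    congr 1
    abel
  have massoc : ∀ a b d, m (m a b) d = m a (m b d) := by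
    intro a b d
    rw [hm (m a b) d, hm a (m b d), hm a b, hm b d]
    simp only [add_mul, mul_add, smul_add, smul_mul_assoc, mul_smul_comm, smul_smul, mul_assoc]
    abel
  have madd₁ : ∀ a b d : A, m (a + b) d = m a d + m b d := by
    intro a b d
    rw [hm (a+b) d, hm a d, hm b d]
    simp only [add_mul, smul_add]
    abel
  have madd₂ : ∀ a b d : A, m a (b + d) = m a b + m a d := by
    intro a b d
    rw [hm a (b+d), hm a b, hm a d]
    simp only [mul_add, smul_add]
    abel
  have msmul₁ : ∀ (r : k) (a b : A), m (r • a) b = r • m a b := by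
    intro r a b
    rw [hm (r • a) b, hm a b]
    simp only [smul_mul_assoc, smul_add]
    rw [smul_comm c r]
  have msmul₂ : ∀ (r : k) (a b : A), m a (r • b) = r • m a b := by
    intro r a b
    rw [hm a (r • b), hm a b]
    simp only [mul_smul_comm, smul_add]
    rw [smul_comm c r]
  have hs : jmul x x = m x x := by
    rw [hj, ← two_smul k, smul_smul, inv_mul_cancel₀ hchar, one_smul]
  rw [hs, hj (m x x) y, hj y x, hj, hj]
  simp only [msmul₁, msmul₂, madd₁, madd₂, smul_add, massoc]
  module
end

section
/- Let A be an associative algebra with idempotent q and x, y, z ∈ (A,q). Define ⟨x,y⟩₁ := x(qy) − (qy)x. Then the right Leibniz identity holds: ⟨x,⟨y,z⟩₁⟩₁ = ⟨⟨x,y⟩₁,z⟩₁ − ⟨⟨x,z⟩₁,y⟩₁. -/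
theorem angle_bracket_1_leibniz
    {k A : Type*} [Field k] [Ring A] [Algebra k A]
    (q : A) (hq : q * q = q) (x y z : A)
    (hx : q * x * q = q * x) (hy : q * y * q = q * y) (hz : q * z * q = q * z)
    (ab : A → A → A)
    (hab : ∀ a b : A, ab a b = a * (q * b) - (q * b) * a) :
    ab x (ab y z) = ab (ab x y) z - ab (ab x z) y := by
  have e1 : x * q * y * q = x * q * y := by
    rw [mul_assoc x q y, mul_assoc x (q * y) q, hy]
  have e2 : x * q * z * q = x * q * z := by
    rw [mul_assoc x q z, mul_assoc x (q * z) q, hz]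
  simp only [hab, mul_sub, sub_mul, ← mul_assoc, hq, hy, hz, e1, e2]
  abel
end

section
/- Let A be an associative algebra with idempotent q, h, k scalars, and x, y, z ∈ (A,q). Define ⟨x,y⟩_{3,k} := xy − yx − (xy)q + (yx)q + k·x(qy) − k·(qy)x. Then ⟨x,⟨y,z⟩_{3,k}⟩_{3,h} = ⟨⟨x,y⟩_{3,h},z⟩_{3,k} − ⟨⟨x,z⟩_{3,k},y⟩_{3,h}. -/
section AngleBracketHelpers

variable {A : Type*} [Ring A]

private lemma hq2 (q : A) (hq : q * q = q) (t : A) : q * (q * t) = q * t := by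
  rw [← mul_assoc, hq]

private lemma notail (q : A) {a : A} (ha : q * a * q = q * a) : q * (a * q) = q * a := by
  rw [← mul_assoc, ha]

private lemma tail (q : A) {a : A} (ha : q * a * q = q * a) (t : A) :
    q * (a * (q * t)) = q * (a * t) := by
  rw [← mul_assoc, ← mul_assoc, ha, mul_assoc]

private lemma clmul (q : A) (hq : q * q = q) {a b : A} (ha : q * a * q = q * a)
    (hb : q * b * q = q * b) : q * (a * b) * q = q * (a * b) := by
  rw [← mul_assoc, ← ha, mul_assoc (q * a * q) b q, mul_assoc (q * a) q (b * q),
    ← mul_assoc q b q, hb, ← mul_assoc, ha, mul_assoc]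

private lemma cl2no (q : A) (hq : q * q = q) {a b : A} (ha : q * a * q = q * a)
    (hb : q * b * q = q * b) : q * (a * (b * q)) = q * (a * b) := by
  rw [← mul_assoc a b q]
  exact notail q (clmul q hq ha hb)

private lemma cl2t (q : A) (hq : q * q = q) {a b : A} (ha : q * a * q = q * a)
    (hb : q * b * q = q * b) (t : A) : q * (a * (b * (q * t))) = q * (a * (b * t)) := by
  rw [← mul_assoc a b (q * t), ← mul_assoc a b t]
  exact tail q (clmul q hq ha hb) t

private lemma cl3no (q : A) (hq : q * q = q) {a b c : A} (ha : q * a * q = q * a)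
    (hb : q * b * q = q * b) (hc : q * c * q = q * c) :
    q * (a * (b * (c * q))) = q * (a * (b * c)) := by
  rw [← mul_assoc b c q, ← mul_assoc a (b * c) q]
  exact notail q (clmul q hq ha (clmul q hq hb hc))

private lemma cl3t (q : A) (hq : q * q = q) {a b c : A} (ha : q * a * q = q * a)
    (hb : q * b * q = q * b) (hc : q * c * q = q * c) (t : A) :
    q * (a * (b * (c * (q * t)))) = q * (a * (b * (c * t))) := by
  rw [← mul_assoc b c (q * t), ← mul_assoc a (b * c) (q * t), ← mul_assoc b c t,
    ← mul_assoc a (b * c) t]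
  exact tail q (clmul q hq ha (clmul q hq hb hc)) t

end AngleBracketHelpers

theorem angle_bracket_3_jacobi_like
    {k A : Type*} [Field k] [Ring A] [Algebra k A]
    (q : A) (hq : q * q = q) (h c : k) (x y z : A)
    (hx : q * x * q = q * x) (hy : q * y * q = q * y) (hz : q * z * q = q * z)
    (ab : k → A → A → A)
    (hab : ∀ (t : k) (a b : A),
      ab t a b = a * b - b * a - (a * b) * q + (b * a) * q
        + t • (a * (q * b)) - t • ((q * b) * a)) :
    ab h x (ab c y z) = ab c (ab h x y) z - ab h (ab c x z) y := by
  simp only [hab, mul_sub, sub_mul, mul_add, add_mul, smul_sub, smul_add, smul_smul,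
    mul_smul_comm, smul_mul_assoc, mul_assoc, hq,
    hq2 q hq, notail q hx, notail q hy, notail q hz, tail q hx, tail q hy, tail q hz, cl2no q hq hx hx, cl2t q hq hx hx, cl3no q hq hx hx hx, cl3t q hq hx hx hx, cl3no q hq hx hx hy, cl3t q hq hx hx hy, cl3no q hq hx hx hz, cl3t q hq hx hx hz, cl2no q hq hx hy, cl2t q hq hx hy, cl3no q hq hx hy hx, cl3t q hq hx hy hx, cl3no q hq hx hy hy, cl3t q hq hx hy hy, cl3no q hq hx hy hz, cl3t q hq hx hy hz, cl2no q hq hx hz, cl2t q hq hx hz, cl3no q hq hx hz hx, cl3t q hq hx hz hx, cl3no q hq hx hz hy, cl3t q hq hx hz hy, cl3no q hq hx hz hz, cl3t q hq hx hz hz, cl2no q hq hy hx, cl2t q hq hy hx, cl3no q hq hy hx hx, cl3t q hq hy hx hx, cl3no q hq hy hx hy, cl3t q hq hy hx hy, cl3no q hq hy hx hz, cl3t q hq hy hx hz, cl2no q hq hy hy, cl2t q hq hy hy, cl3no q hq hy hy hx, cl3t q hq hy hy hx, cl3no q hq hy hy hy, cl3t q hq hy hy hy, cl3no q hq hy hy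 hz, cl3t q hq hy hy hz, cl2no q hq hy hz, cl2t q hq hy hz, cl3no q hq hy hz hx, cl3t q hq hy hz hx, cl3no q hq hy hz hy, cl3t q hq hy hz hy, cl3no q hq hy hz hz, cl3t q hq hy hz hz, cl2no q hq hz hx, cl2t q hq hz hx, cl3no q hq hz hx hx, cl3t q hq hz hx hx, cl3no q hq hz hx hy, cl3t q hq hz hx hy, cl3no q hq hz hx hz, cl3t q hq hz hx hz, cl2no q hq hz hy, cl2t q hq hz hy, cl3no q hq hz hy hx, cl3t q hq hz hy hx, cl3no q hq hz hy hy, cl3t q hq hz hy hy, cl3no q hq hz hy hz, cl3t q hq hz hy hz, cl2no q hq hz hz, cl2t q hq hz hz, cl3no q hq hz hz hx, cl3t q hq hz hz hx, cl3no q hq hz hz hy, cl3t q hq hz hz hy, cl3no q hq hz hz hz, cl3t q hq hz hz hz]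
  module
end

section
/- Let A be an associative algebra with idempotent q, k a fixed scalar, and x, y, z ∈ (A,q). Define x ·₁ y := k·yx + x(qy) − k·y(qx). Then the pre-Lie identity holds: (x·₁y)·₁z − x·₁(y·₁z) = (x·₁z)·₁y − x·₁(z·₁y). -/
theorem pre_lie_dot_1
    {k A : Type*} [Field k] [Ring A] [Algebra k A]
    (q : A) (hq : q * q = q) (c : k) (x y z : A)
    (hx : q * x * q = q * x) (hy : q * y * q = q * y) (hz : q * z * q = q * z)
    (dot : A → A → A)
    (hdot : ∀ a b : A, dot a b = c • (b * a) + a * (q * b) - c • (b * (q * a))) :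
    dot (dot x y) z - dot x (dot y z) = dot (dot x z) y - dot x (dot z y) := by
  have h1 : ∀ a : A, q * (q * a) = q * a := by
    intro a; rw [← mul_assoc, hq]
  have hx1 : ∀ a : A, q * (x * (q * a)) = q * (x * a) := by
    intro a; rw [show q * (x * (q * a)) = (q * x * q) * a by noncomm_ring, hx, mul_assoc]
  have hy1 : ∀ a : A, q * (y * (q * a)) = q * (y * a) := by
    intro a; rw [show q * (y * (q * a)) = (q * y * q) * a by noncomm_ring, hy, mul_assoc]
  have hz1 : ∀ a : A, q * (z * (q * a)) = q * (z * a) := by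
    intro a; rw [show q * (z * (q * a)) = (q * z * q) * a by noncomm_ring, hz, mul_assoc]
  simp only [hdot, mul_add, add_mul, mul_sub, sub_mul, smul_mul_assoc, mul_smul_comm,
    smul_add, smul_sub, smul_smul, mul_assoc, h1, hx1, hy1, hz1]
  abel
end

section
/- Let A be an associative algebra with idempotent q, k a fixed scalar, and x, y, z ∈ (A,q). Define x ·₃ y := xy + y(qx) − (qx)y. Then the left-symmetric identity holds: x·₃(y·₃z) − (x·₃y)·₃z = y·₃(x·₃z) − (y·₃x)·₃z. -/
theorem left_symmetric_dot_3
    {k A : Type*} [Field k] [Ring A] [Algebra k A]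
    (q : A) (hq : q * q = q) (c : k) (x y z : A)
    (hx : q * x * q = q * x) (hy : q * y * q = q * y) (hz : q * z * q = q * z)
    (dot : A → A → A)
    (hdot : ∀ a b : A, dot a b = a * b + b * (q * a) - (q * a) * b) :
    dot x (dot y z) - dot (dot x y) z = dot y (dot x z) - dot (dot y x) z := by
  have hx' : q * (x * q) = q * x := by rw [← mul_assoc, hx]
  have hy' : q * (y * q) = q * y := by rw [← mul_assoc, hy]
  have hz' : q * (z * q) = q * z := by rw [← mul_assoc, hz]
  have hqq : ∀ w : A, q * (q * w) = q * w := fun w => by rw [← mul_assoc, hq]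
  simp only [hdot, mul_add, add_mul, mul_sub, sub_mul, mul_assoc, hq, hx', hy', hz', hqq]
  abel
end

section
/- Let A be an associative algebra with idempotent q, k a fixed scalar, and x, y, z ∈ (A,q). Define x ·₁₃ y := yx + x(qy) − (xy)q + k·(qy)x − (yx)q. Then the left-symmetric identity holds: x·₁₃(y·₁₃z) − (x·₁₃y)·₁₃z = y·₁₃(x·₁₃z) − (y·₁₃x)·₁₃z. -/
theorem left_symmetric_dot_13
    {k A : Type*} [Field k] [Ring A] [Algebra k A]
    (q : A) (hq : q * q = q) (c : k) (x y z : A)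
    (hx : q * x * q = q * x) (hy : q * y * q = q * y) (hz : q * z * q = q * z)
    (dot : A → A → A)
    (hdot : ∀ a b : A,
      dot a b = b * a + a * (q * b) - (a * b) * q + c • ((q * b) * a) - (b * a) * q) :
    dot x (dot y z) - dot (dot x y) z = dot y (dot x z) - dot (dot y x) z := by
  have hq' : ∀ t : A, q * (q * t) = q * t := fun t => by rw [← mul_assoc, hq]
  have inv2 : ∀ a b : A, q * a * q = q * a → q * b * q = q * b → q * (a * b) * q = q * (a * b) := by
    intro a b ha hb
    calc q * (a * b) * q = (q * a * q) * (b * q) := by rw [ha]; noncomm_ring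
      _ = (q * a) * (q * b * q) := by noncomm_ring
      _ = (q * a) * (q * b) := by rw [hb]
      _ = (q * a * q) * b := by noncomm_ring
      _ = (q * a) * b := by rw [ha]
      _ = q * (a * b) := by rw [mul_assoc]
  have P1 : ∀ a : A, q * a * q = q * a →
      (q * (a * q) = q * a ∧ ∀ t : A, q * (a * (q * t)) = q * (a * t)) := by
    intro a ha
    refine ⟨by rw [← mul_assoc, ha], fun t => ?_⟩
    rw [show q * (a * (q * t)) = (q * a * q) * t from by noncomm_ring, ha, mul_assoc]
  have P2 : ∀ a b : A, q * (a * b) * q = q * (a * b) →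
      (q * (a * (b * q)) = q * (a * b) ∧ ∀ t : A, q * (a * (b * (q * t))) = q * (a * (b * t))) := by
    intro a b h
    refine ⟨by rw [show q * (a * (b * q)) = q * (a * b) * q from by noncomm_ring, h], fun t => ?_⟩
    rw [show q * (a * (b * (q * t))) = (q * (a * b) * q) * t from by noncomm_ring, h]
    noncomm_ring
  have P3 : ∀ a b d : A, q * (a * (b * d)) * q = q * (a * (b * d)) →
      (q * (a * (b * (d * q))) = q * (a * (b * d)) ∧
        ∀ t : A, q * (a * (b * (d * (q * t)))) = q * (a * (b * (d * t)))) := by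
    intro a b d h
    refine ⟨by rw [show q * (a * (b * (d * q))) = q * (a * (b * d)) * q from by noncomm_ring, h], fun t => ?_⟩
    rw [show q * (a * (b * (d * (q * t)))) = (q * (a * (b * d)) * q) * t from by noncomm_ring, h]
    noncomm_ring
  obtain ⟨hx1, hx2⟩ := P1 x hx
  obtain ⟨hy1, hy2⟩ := P1 y hy
  obtain ⟨hz1, hz2⟩ := P1 z hz
  have Ixx : q * (x * x) * q = q * (x * x) := inv2 x x hx hx
  obtain ⟨Ixx1, Ixx2⟩ := P2 x x Ixx
  have Ixy : q * (x * y) * q = q * (x * y) := inv2 x y hx hy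
  obtain ⟨Ixy1, Ixy2⟩ := P2 x y Ixy
  have Ixz : q * (x * z) * q = q * (x * z) := inv2 x z hx hz
  obtain ⟨Ixz1, Ixz2⟩ := P2 x z Ixz
  have Iyx : q * (y * x) * q = q * (y * x) := inv2 y x hy hx
  obtain ⟨Iyx1, Iyx2⟩ := P2 y x Iyx
  have Iyy : q * (y * y) * q = q * (y * y) := inv2 y y hy hy
  obtain ⟨Iyy1, Iyy2⟩ := P2 y y Iyy
  have Iyz : q * (y * z) * q = q * (y * z) := inv2 y z hy hz
  obtain ⟨Iyz1, Iyz2⟩ := P2 y z Iyz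
  have Izx : q * (z * x) * q = q * (z * x) := inv2 z x hz hx
  obtain ⟨Izx1, Izx2⟩ := P2 z x Izx
  have Izy : q * (z * y) * q = q * (z * y) := inv2 z y hz hy
  obtain ⟨Izy1, Izy2⟩ := P2 z y Izy
  have Izz : q * (z * z) * q = q * (z * z) := inv2 z z hz hz
  obtain ⟨Izz1, Izz2⟩ := P2 z z Izz
  have Ixxx : q * (x * (x * x)) * q = q * (x * (x * x)) := by
    have := inv2 (x * x) x Ixx hx
    rw [show q * (x * x * x) * q = q * (x * (x * x)) * q from by noncomm_ring, show q * (x * x * x) = q * (x * (x * x)) from by noncomm_ring] at this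
    exact this
  obtain ⟨Ixxx1, Ixxx2⟩ := P3 x x x Ixxx
  have Ixxy : q * (x * (x * y)) * q = q * (x * (x * y)) := by
    have := inv2 (x * x) y Ixx hy
    rw [show q * (x * x * y) * q = q * (x * (x * y)) * q from by noncomm_ring, show q * (x * x * y) = q * (x * (x * y)) from by noncomm_ring] at this
    exact this
  obtain ⟨Ixxy1, Ixxy2⟩ := P3 x x y Ixxy
  have Ixxz : q * (x * (x * z)) * q = q * (x * (x * z)) := by
    have := inv2 (x * x) z Ixx hz
    rw [show q * (x * x * z) * q = q * (x * (x * z)) * q from by noncomm_ring, show q * (x * x * z) = q * (x * (x * z)) from by noncomm_ring] at this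
    exact this
  obtain ⟨Ixxz1, Ixxz2⟩ := P3 x x z Ixxz
  have Ixyx : q * (x * (y * x)) * q = q * (x * (y * x)) := by
    have := inv2 (x * y) x Ixy hx
    rw [show q * (x * y * x) * q = q * (x * (y * x)) * q from by noncomm_ring, show q * (x * y * x) = q * (x * (y * x)) from by noncomm_ring] at this
    exact this
  obtain ⟨Ixyx1, Ixyx2⟩ := P3 x y x Ixyx
  have Ixyy : q * (x * (y * y)) * q = q * (x * (y * y)) := by
    have := inv2 (x * y) y Ixy hy
    rw [show q * (x * y * y) * q = q * (x * (y * y)) * q from by noncomm_ring, show q * (x * y * y) = q * (x * (y * y)) from by noncomm_ring] at this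
    exact this
  obtain ⟨Ixyy1, Ixyy2⟩ := P3 x y y Ixyy
  have Ixyz : q * (x * (y * z)) * q = q * (x * (y * z)) := by
    have := inv2 (x * y) z Ixy hz
    rw [show q * (x * y * z) * q = q * (x * (y * z)) * q from by noncomm_ring, show q * (x * y * z) = q * (x * (y * z)) from by noncomm_ring] at this
    exact this
  obtain ⟨Ixyz1, Ixyz2⟩ := P3 x y z Ixyz
  have Ixzx : q * (x * (z * x)) * q = q * (x * (z * x)) := by
    have := inv2 (x * z) x Ixz hx
    rw [show q * (x * z * x) * q = q * (x * (z * x)) * q from by noncomm_ring, show q * (x * z * x) = q * (x * (z * x)) from by noncomm_ring] at this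
    exact this
  obtain ⟨Ixzx1, Ixzx2⟩ := P3 x z x Ixzx
  have Ixzy : q * (x * (z * y)) * q = q * (x * (z * y)) := by
    have := inv2 (x * z) y Ixz hy
    rw [show q * (x * z * y) * q = q * (x * (z * y)) * q from by noncomm_ring, show q * (x * z * y) = q * (x * (z * y)) from by noncomm_ring] at this
    exact this
  obtain ⟨Ixzy1, Ixzy2⟩ := P3 x z y Ixzy
  have Ixzz : q * (x * (z * z)) * q = q * (x * (z * z)) := by
    have := inv2 (x * z) z Ixz hz
    rw [show q * (x * z * z) * q = q * (x * (z * z)) * q from by noncomm_ring, show q * (x * z * z) = q * (x * (z * z)) from by noncomm_ring] at this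
    exact this
  obtain ⟨Ixzz1, Ixzz2⟩ := P3 x z z Ixzz
  have Iyxx : q * (y * (x * x)) * q = q * (y * (x * x)) := by
    have := inv2 (y * x) x Iyx hx
    rw [show q * (y * x * x) * q = q * (y * (x * x)) * q from by noncomm_ring, show q * (y * x * x) = q * (y * (x * x)) from by noncomm_ring] at this
    exact this
  obtain ⟨Iyxx1, Iyxx2⟩ := P3 y x x Iyxx
  have Iyxy : q * (y * (x * y)) * q = q * (y * (x * y)) := by
    have := inv2 (y * x) y Iyx hy
    rw [show q * (y * x * y) * q = q * (y * (x * y)) * q from by noncomm_ring, show q * (y * x * y) = q * (y * (x * y)) from by noncomm_ring] at this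
    exact this
  obtain ⟨Iyxy1, Iyxy2⟩ := P3 y x y Iyxy
  have Iyxz : q * (y * (x * z)) * q = q * (y * (x * z)) := by
    have := inv2 (y * x) z Iyx hz
    rw [show q * (y * x * z) * q = q * (y * (x * z)) * q from by noncomm_ring, show q * (y * x * z) = q * (y * (x * z)) from by noncomm_ring] at this
    exact this
  obtain ⟨Iyxz1, Iyxz2⟩ := P3 y x z Iyxz
  have Iyyx : q * (y * (y * x)) * q = q * (y * (y * x)) := by
    have := inv2 (y * y) x Iyy hx
    rw [show q * (y * y * x) * q = q * (y * (y * x)) * q from by noncomm_ring, show q * (y * y * x) = q * (y * (y * x)) from by noncomm_ring] at this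
    exact this
  obtain ⟨Iyyx1, Iyyx2⟩ := P3 y y x Iyyx
  have Iyyy : q * (y * (y * y)) * q = q * (y * (y * y)) := by
    have := inv2 (y * y) y Iyy hy
    rw [show q * (y * y * y) * q = q * (y * (y * y)) * q from by noncomm_ring, show q * (y * y * y) = q * (y * (y * y)) from by noncomm_ring] at this
    exact this
  obtain ⟨Iyyy1, Iyyy2⟩ := P3 y y y Iyyy
  have Iyyz : q * (y * (y * z)) * q = q * (y * (y * z)) := by
    have := inv2 (y * y) z Iyy hz
    rw [show q * (y * y * z) * q = q * (y * (y * z)) * q from by noncomm_ring, show q * (y * y * z) = q * (y * (y * z)) from by noncomm_ring] at this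
    exact this
  obtain ⟨Iyyz1, Iyyz2⟩ := P3 y y z Iyyz
  have Iyzx : q * (y * (z * x)) * q = q * (y * (z * x)) := by
    have := inv2 (y * z) x Iyz hx
    rw [show q * (y * z * x) * q = q * (y * (z * x)) * q from by noncomm_ring, show q * (y * z * x) = q * (y * (z * x)) from by noncomm_ring] at this
    exact this
  obtain ⟨Iyzx1, Iyzx2⟩ := P3 y z x Iyzx
  have Iyzy : q * (y * (z * y)) * q = q * (y * (z * y)) := by
    have := inv2 (y * z) y Iyz hy
    rw [show q * (y * z * y) * q = q * (y * (z * y)) * q from by noncomm_ring, show q * (y * z * y) = q * (y * (z * y)) from by noncomm_ring] at this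
    exact this
  obtain ⟨Iyzy1, Iyzy2⟩ := P3 y z y Iyzy
  have Iyzz : q * (y * (z * z)) * q = q * (y * (z * z)) := by
    have := inv2 (y * z) z Iyz hz
    rw [show q * (y * z * z) * q = q * (y * (z * z)) * q from by noncomm_ring, show q * (y * z * z) = q * (y * (z * z)) from by noncomm_ring] at this
    exact this
  obtain ⟨Iyzz1, Iyzz2⟩ := P3 y z z Iyzz
  have Izxx : q * (z * (x * x)) * q = q * (z * (x * x)) := by
    have := inv2 (z * x) x Izx hx
    rw [show q * (z * x * x) * q = q * (z * (x * x)) * q from by noncomm_ring, show q * (z * x * x) = q * (z * (x * x)) from by noncomm_ring] at this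
    exact this
  obtain ⟨Izxx1, Izxx2⟩ := P3 z x x Izxx
  have Izxy : q * (z * (x * y)) * q = q * (z * (x * y)) := by
    have := inv2 (z * x) y Izx hy
    rw [show q * (z * x * y) * q = q * (z * (x * y)) * q from by noncomm_ring, show q * (z * x * y) = q * (z * (x * y)) from by noncomm_ring] at this
    exact this
  obtain ⟨Izxy1, Izxy2⟩ := P3 z x y Izxy
  have Izxz : q * (z * (x * z)) * q = q * (z * (x * z)) := by
    have := inv2 (z * x) z Izx hz
    rw [show q * (z * x * z) * q = q * (z * (x * z)) * q from by noncomm_ring, show q * (z * x * z) = q * (z * (x * z)) from by noncomm_ring] at this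
    exact this
  obtain ⟨Izxz1, Izxz2⟩ := P3 z x z Izxz
  have Izyx : q * (z * (y * x)) * q = q * (z * (y * x)) := by
    have := inv2 (z * y) x Izy hx
    rw [show q * (z * y * x) * q = q * (z * (y * x)) * q from by noncomm_ring, show q * (z * y * x) = q * (z * (y * x)) from by noncomm_ring] at this
    exact this
  obtain ⟨Izyx1, Izyx2⟩ := P3 z y x Izyx
  have Izyy : q * (z * (y * y)) * q = q * (z * (y * y)) := by
    have := inv2 (z * y) y Izy hy
    rw [show q * (z * y * y) * q = q * (z * (y * y)) * q from by noncomm_ring, show q * (z * y * y) = q * (z * (y * y)) from by noncomm_ring] at this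
    exact this
  obtain ⟨Izyy1, Izyy2⟩ := P3 z y y Izyy
  have Izyz : q * (z * (y * z)) * q = q * (z * (y * z)) := by
    have := inv2 (z * y) z Izy hz
    rw [show q * (z * y * z) * q = q * (z * (y * z)) * q from by noncomm_ring, show q * (z * y * z) = q * (z * (y * z)) from by noncomm_ring] at this
    exact this
  obtain ⟨Izyz1, Izyz2⟩ := P3 z y z Izyz
  have Izzx : q * (z * (z * x)) * q = q * (z * (z * x)) := by
    have := inv2 (z * z) x Izz hx
    rw [show q * (z * z * x) * q = q * (z * (z * x)) * q from by noncomm_ring, show q * (z * z * x) = q * (z * (z * x)) from by noncomm_ring] at this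
    exact this
  obtain ⟨Izzx1, Izzx2⟩ := P3 z z x Izzx
  have Izzy : q * (z * (z * y)) * q = q * (z * (z * y)) := by
    have := inv2 (z * z) y Izz hy
    rw [show q * (z * z * y) * q = q * (z * (z * y)) * q from by noncomm_ring, show q * (z * z * y) = q * (z * (z * y)) from by noncomm_ring] at this
    exact this
  obtain ⟨Izzy1, Izzy2⟩ := P3 z z y Izzy
  have Izzz : q * (z * (z * z)) * q = q * (z * (z * z)) := by
    have := inv2 (z * z) z Izz hz
    rw [show q * (z * z * z) * q = q * (z * (z * z)) * q from by noncomm_ring, show q * (z * z * z) = q * (z * (z * z)) from by noncomm_ring] at this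
    exact this
  obtain ⟨Izzz1, Izzz2⟩ := P3 z z z Izzz
  simp only [hdot, mul_add, add_mul, mul_sub, sub_mul, smul_add, smul_sub,
    mul_smul_comm, smul_mul_assoc, smul_smul, mul_assoc, hq, hq', hx1, hx2, hy1, hy2, hz1, hz2, Ixx1, Ixx2, Ixy1, Ixy2, Ixz1, Ixz2, Iyx1, Iyx2, Iyy1, Iyy2, Iyz1, Iyz2, Izx1, Izx2, Izy1, Izy2, Izz1, Izz2, Ixxx1, Ixxx2, Ixxy1, Ixxy2, Ixxz1, Ixxz2, Ixyx1, Ixyx2, Ixyy1, Ixyy2, Ixyz1, Ixyz2, Ixzx1, Ixzx2, Ixzy1, Ixzy2, Ixzz1, Ixzz2, Iyxx1, Iyxx2, Iyxy1, Iyxy2, Iyxz1, Iyxz2, Iyyx1, Iyyx2, Iyyy1, Iyyy2, Iyyz1, Iyyz2, Iyzx1, Iyzx2, Iyzy1, Iyzy2, Iyzz1, Iyzz2, Izxx1, Izxx2, Izxy1, Izxy2, Izxz1, Izxz2, Izyx1, Izyx2, Izyy1, Izyy2, Izyz1, Izyz2, Izzx1, Izzx2, Izzy1, Izzy2, Izzz1,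 Izzz2]
  abel
end
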